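/- Fourier sparsity of Mackey functions (finite group case): Let G be a finite group, H ≤ G, ρ an irreducible representation of H on V, and F : G → V a Mackey function (F(gh) = ρ(h⁻¹)F(g)). Let U be an irreducible unitary representation of G such that U|_H = ⊕_{i∈I} ρ^i is block-diagonal with H-irreducible blocks ρ^i. Then for each component k of F, the matrix F̂_k = ∑_{g∈G} F_k(g) · conj(U(g)) has its j-th column equal to zero whenever the block of U|_H containing column j is an irrep ρ^i that is not equivalent to the dual representation of ρ. -/

import Mathlib

open Matrix

/-- The dual of an irreducible representation is irreducible. -/
private lemma dual_irred {H : Type*} [Group H] {n : ℕ} (τ : H →* GL (Fin n) ℂ)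
    (hτ : ∀ S : Submodule ℂ (Fin n → ℂ),
      (∀ h : H, ∀ v ∈ S, ((τ h : Matrix (Fin n) (Fin n) ℂ)).mulVec v ∈ S) → S = ⊥ ∨ S = ⊤)
    (S : Submodule ℂ (Fin n → ℂ))
    (hS : ∀ h : H, ∀ v ∈ S, (((τ h⁻¹ : Matrix (Fin n) (Fin n) ℂ))ᵀ).mulVec v ∈ S) :
    S = ⊥ ∨ S = ⊤ := by
  classical
  let S' : Submodule ℂ (Fin n → ℂ) :=
    { carrier := {w | ∀ v ∈ S, v ⬝ᵥ w = 0}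
      add_mem' := by
        intro a b ha hb v hv
        simp [dotProduct_add, ha v hv, hb v hv]
      zero_mem' := by
        intro v hv; simp
      smul_mem' := by
        intro c w hw v hv
        simp [dotProduct_smul, hw v hv] }
  have hS'inv : ∀ h : H, ∀ w ∈ S', ((τ h : Matrix (Fin n) (Fin n) ℂ)).mulVec w ∈ S' := by
    intro h w hw v hv
    have h1 : v ⬝ᵥ ((τ h : Matrix (Fin n) (Fin n) ℂ)).mulVec w
        = (((τ h : Matrix (Fin n) (Fin n) ℂ))ᵀ.mulVec v) ⬝ᵥ w := by
      rw [dotProduct_mulVec, mulVec_transpose]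
    have h2 : ((τ h : Matrix (Fin n) (Fin n) ℂ))ᵀ.mulVec v ∈ S := by
      have := hS h⁻¹ v hv
      simpa using this
    exact h1.trans (hw _ h2)
  rcases hτ S' hS'inv with h' | h'
  · -- S' = ⊥  ⇒  S = ⊤
    right
    by_contra hne
    obtain ⟨x, hx⟩ : ∃ x, x ∉ S := by
      by_contra hall
      push_neg at hall
      exact hne (Submodule.eq_top_iff'.2 hall)
    obtain ⟨f, hfx, hfS⟩ := S.exists_dual_map_eq_bot_of_notMem hx inferInstance
    set w : Fin n → ℂ := fun i => f (fun j => if i = j then 1 else 0) with hw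
    have hwS' : w ∈ S' := by
      intro v hv
      have : f v = 0 := by
        have : f v ∈ S.map f := Submodule.mem_map_of_mem hv
        rw [hfS] at this
        simpa using this
      rw [← this, f.pi_apply_eq_sum_univ v]
      simp [dotProduct, hw, smul_eq_mul]
    have hw0 : w = 0 := by
      rw [h'] at hwS'
      simpa using hwS'
    apply hfx
    rw [f.pi_apply_eq_sum_univ x]
    have hz : ∀ i : Fin n, (f fun j => if i = j then 1 else 0) = 0 := fun i => congrFun hw0 i
    simp only [smul_eq_mul, hz, mul_zero, Finset.sum_const_zero]
  · -- S' = ⊤  ⇒  S = ⊥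
    left
    rw [Submodule.eq_bot_iff]
    intro v hv
    funext i
    have hmem : (Pi.single i 1 : Fin n → ℂ) ∈ S' := h' ▸ Submodule.mem_top
    have := hmem v hv
    simpa [dotProduct, Pi.single_apply, mul_ite, Finset.sum_ite_eq'] using this

private lemma mul_blockDiagonal'_submatrix {l : Type*} [Fintype l] {k : ℕ} {m : Fin k → ℕ}
    (X : Matrix l (Σ i : Fin k, Fin (m i)) ℂ)
    (D : ∀ i : Fin k, Matrix (Fin (m i)) (Fin (m i)) ℂ) (i0 : Fin k) :
    (X * blockDiagonal' D).submatrix id (Sigma.mk i0) =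
      X.submatrix id (Sigma.mk i0) * D i0 := by
  ext c q
  simp only [submatrix_apply, id_eq, mul_apply]
  rw [← Finset.univ_sigma_univ, Finset.sum_sigma]
  rw [Finset.sum_eq_single i0]
  · apply Finset.sum_congr rfl
    intro a _
    rw [blockDiagonal'_apply_eq]
  · intro i _ hi
    apply Finset.sum_eq_zero
    intro a _
    rw [blockDiagonal'_apply_ne _ _ _ hi, mul_zero]
  · simp

private lemma mul_submatrix_id {l n o p : Type*} [Fintype n]
    (A : Matrix l n ℂ) (Y : Matrix n o ℂ) (σ : p → o) :
    (A * Y).submatrix id σ = A * (Y.submatrix id σ) := by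
  ext c q
  simp [mul_apply]

private lemma vecMulVec_mulVec_vecMul {l n o p : Type*} [Fintype n] [Fintype o]
    (M : Matrix l n ℂ) (v : n → ℂ) (w : o → ℂ) (N : Matrix o p ℂ) :
    vecMulVec (M.mulVec v) (Matrix.vecMul w N) = M * vecMulVec v w * N := by
  rw [vecMulVec_eq Unit, vecMulVec_eq Unit, replicateCol_mulVec, replicateRow_vecMul]
  simp only [Matrix.mul_assoc]

/-- Fourier sparsity of Mackey functions (finite group case): columns of the Fourier
transform of a Mackey function indexed by blocks not equivalent to the dual of `ρ`
vanish. -/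
theorem stmt_12 {G : Type*} [Group G] [Fintype G] (H : Subgroup G) {d : ℕ}
    -- ρ : irreducible representation of H on ℂ^d
    (ρ : H →* GL (Fin d) ℂ)
    (hρ : ∀ S : Submodule ℂ (Fin d → ℂ),
      (∀ (h : H), ∀ v ∈ S, ((ρ h : Matrix (Fin d) (Fin d) ℂ)).mulVec v ∈ S) → S = ⊥ ∨ S = ⊤)
    -- F : a Mackey function for ρ
    (F : G → (Fin d → ℂ))
    (hF : ∀ (g : G) (h : H), F (g * h) = ((ρ h⁻¹ : Matrix (Fin d) (Fin d) ℂ)).mulVec (F g))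
    -- U : irreducible unitary representation of G whose restriction to H is block
    -- diagonal with irreducible blocks ρ' i
    {k : ℕ} {m : Fin k → ℕ}
    (U : G →* Matrix.unitaryGroup (Σ i : Fin k, Fin (m i)) ℂ)
    (hU : ∀ S : Submodule ℂ ((Σ i : Fin k, Fin (m i)) → ℂ),
      (∀ (g : G), ∀ v ∈ S,
        ((U g : Matrix (Σ i : Fin k, Fin (m i)) (Σ i : Fin k, Fin (m i)) ℂ)).mulVec v ∈ S) →
        S = ⊥ ∨ S = ⊤)
    (ρ' : (i : Fin k) → (H →* GL (Fin (m i)) ℂ))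
    (hρ' : ∀ i : Fin k, ∀ S : Submodule ℂ (Fin (m i) → ℂ),
      (∀ (h : H), ∀ v ∈ S,
        ((ρ' i h : Matrix (Fin (m i)) (Fin (m i)) ℂ)).mulVec v ∈ S) → S = ⊥ ∨ S = ⊤)
    (hblock : ∀ h : H,
      (U (h : G) : Matrix (Σ i : Fin k, Fin (m i)) (Σ i : Fin k, Fin (m i)) ℂ) =
        Matrix.blockDiagonal' fun i => (ρ' i h : Matrix (Fin (m i)) (Fin (m i)) ℂ))
    -- the block containing column j is not equivalent to the dual of ρ
    (j : Σ i : Fin k, Fin (m i))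
    (hnotdual : ¬ ∃ Q : Matrix (Fin d) (Fin (m j.1)) ℂ,
      (∃ Q' : Matrix (Fin (m j.1)) (Fin d) ℂ, Q * Q' = 1 ∧ Q' * Q = 1) ∧
      ∀ h : H, ((ρ h⁻¹ : Matrix (Fin d) (Fin d) ℂ))ᵀ * Q =
        Q * (ρ' j.1 h : Matrix (Fin (m j.1)) (Fin (m j.1)) ℂ)) :
    -- conclusion: the j-th column of the Fourier coefficient of each component of F is 0
    ∀ (c : Fin d) (r : Σ i : Fin k, Fin (m i)),
      (∑ g : G, F g c *
        star ((U g : Matrix (Σ i : Fin k, Fin (m i)) (Σ i : Fin k, Fin (m i)) ℂ) r j)) = 0 := by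
  classical
  intro c r
  -- the Fourier coefficient matrix (for the fixed row r)
  set T : Matrix (Fin d) (Σ i : Fin k, Fin (m i)) ℂ :=
    ∑ g : G, vecMulVec (F g)
      (fun p => star ((U g : Matrix (Σ i : Fin k, Fin (m i)) (Σ i : Fin k, Fin (m i)) ℂ) r p))
    with hT
  -- blocks of U restricted to H are unitary; star-map of a block is transpose of inverse
  have hstar : ∀ (h : H),
      ((ρ' j.1 h : Matrix (Fin (m j.1)) (Fin (m j.1)) ℂ)).map star =
        ((ρ' j.1 h⁻¹ : Matrix (Fin (m j.1)) (Fin (m j.1)) ℂ))ᵀ := by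
    intro h
    have hmem := (U (h : G)).2
    have hmul : ∀ (h₁ h₂ : H),
        (ρ' j.1 h₁ : Matrix (Fin (m j.1)) (Fin (m j.1)) ℂ) *
          (ρ' j.1 h₂ : Matrix (Fin (m j.1)) (Fin (m j.1)) ℂ) =
          (ρ' j.1 (h₁ * h₂) : Matrix (Fin (m j.1)) (Fin (m j.1)) ℂ) := by
      intro h₁ h₂
      rw [← Units.val_mul, ← _root_.map_mul]
    -- each block satisfies A * Aᴴ = 1
    have hAAH : (ρ' j.1 h : Matrix (Fin (m j.1)) (Fin (m j.1)) ℂ) *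
        ((ρ' j.1 h : Matrix (Fin (m j.1)) (Fin (m j.1)) ℂ))ᴴ = 1 := by
      have h1 : (U (h : G) : Matrix (Σ i : Fin k, Fin (m i)) (Σ i : Fin k, Fin (m i)) ℂ) *
          star (U (h : G) : Matrix (Σ i : Fin k, Fin (m i)) (Σ i : Fin k, Fin (m i)) ℂ) = 1 :=
        (Unitary.mem_iff.1 hmem).2
      rw [hblock h] at h1
      rw [Matrix.star_eq_conjTranspose, blockDiagonal'_conjTranspose,
        ← blockDiagonal'_mul, ← blockDiagonal'_one] at h1
      have := (blockDiagonal'_inj).1 h1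
      exact congrFun this j.1
    -- hence Aᴴ = A⁻¹ = ρ'(h⁻¹)
    have hinv : ((ρ' j.1 h : Matrix (Fin (m j.1)) (Fin (m j.1)) ℂ))ᴴ =
        (ρ' j.1 h⁻¹ : Matrix (Fin (m j.1)) (Fin (m j.1)) ℂ) := by
      have hBA : (ρ' j.1 h⁻¹ : Matrix (Fin (m j.1)) (Fin (m j.1)) ℂ) *
          (ρ' j.1 h : Matrix (Fin (m j.1)) (Fin (m j.1)) ℂ) = 1 := by
        rw [hmul, inv_mul_cancel, _root_.map_one, Units.val_one]
      calc ((ρ' j.1 h : Matrix (Fin (m j.1)) (Fin (m j.1)) ℂ))ᴴ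
          = 1 * ((ρ' j.1 h : Matrix (Fin (m j.1)) (Fin (m j.1)) ℂ))ᴴ := by rw [one_mul]
        _ = (ρ' j.1 h⁻¹ : Matrix (Fin (m j.1)) (Fin (m j.1)) ℂ) *
            ((ρ' j.1 h : Matrix (Fin (m j.1)) (Fin (m j.1)) ℂ) *
              ((ρ' j.1 h : Matrix (Fin (m j.1)) (Fin (m j.1)) ℂ))ᴴ) := by
            rw [← Matrix.mul_assoc, hBA]
        _ = (ρ' j.1 h⁻¹ : Matrix (Fin (m j.1)) (Fin (m j.1)) ℂ) := by rw [hAAH, Matrix.mul_one]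
    rw [← hinv]
    rw [conjTranspose]
    rw [Matrix.transpose_map]
    rw [transpose_transpose]
  -- the block-restricted Fourier matrix
  set B : Matrix (Fin d) (Fin (m j.1)) ℂ := T.submatrix id (Sigma.mk (β := fun i => Fin (m i)) j.1) with hB
  -- key intertwining relation
  have key : ∀ h : H, (ρ h : Matrix (Fin d) (Fin d) ℂ) * B =
      B * ((ρ' j.1 h⁻¹ : Matrix (Fin (m j.1)) (Fin (m j.1)) ℂ))ᵀ := by
    intro h
    -- first: T = ρ(h⁻¹) * T * (U h).map star
    have hTrel : T = (ρ h⁻¹ : Matrix (Fin d) (Fin d) ℂ) * T *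
        ((U (h : G) : Matrix (Σ i : Fin k, Fin (m i)) (Σ i : Fin k, Fin (m i)) ℂ)).map star := by
      have hre : T = ∑ g : G, vecMulVec (F (g * (h : G)))
          (fun p => star ((U (g * (h : G)) :
            Matrix (Σ i : Fin k, Fin (m i)) (Σ i : Fin k, Fin (m i)) ℂ) r p)) := by
        rw [hT]
        exact (Fintype.sum_equiv (Equiv.mulRight (h : G)) _ _ (fun g => rfl)).symm
      conv_lhs => rw [hre]
      rw [hT, Matrix.mul_sum, Matrix.sum_mul]
      apply Finset.sum_congr rfl
      intro g _
      have h1 : F (g * (h : G)) = ((ρ h⁻¹ : Matrix (Fin d) (Fin d) ℂ)).mulVec (F g) := hF g h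
      have h2 : (fun p => star ((U (g * (h : G)) :
          Matrix (Σ i : Fin k, Fin (m i)) (Σ i : Fin k, Fin (m i)) ℂ) r p)) =
          Matrix.vecMul (fun p => star ((U g :
            Matrix (Σ i : Fin k, Fin (m i)) (Σ i : Fin k, Fin (m i)) ℂ) r p))
            (((U (h : G) : Matrix (Σ i : Fin k, Fin (m i)) (Σ i : Fin k, Fin (m i)) ℂ)).map star)
          := by
        funext p
        have : (U (g * (h : G)) : Matrix (Σ i : Fin k, Fin (m i)) (Σ i : Fin k, Fin (m i)) ℂ) =
            (U g : Matrix (Σ i : Fin k, Fin (m i)) (Σ i : Fin k, Fin (m i)) ℂ) *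
            (U (h : G) : Matrix (Σ i : Fin k, Fin (m i)) (Σ i : Fin k, Fin (m i)) ℂ) := by
          rw [_root_.map_mul]; rfl
        rw [this]
        simp [mul_apply, vecMul, dotProduct, map_apply, star_sum]
      rw [h1, h2, vecMulVec_mulVec_vecMul]
    -- restrict columns to block j.1
    have hBrel : B = (ρ h⁻¹ : Matrix (Fin d) (Fin d) ℂ) * B *
        ((ρ' j.1 h : Matrix (Fin (m j.1)) (Fin (m j.1)) ℂ)).map star := by
      have hmap : ((U (h : G) :
          Matrix (Σ i : Fin k, Fin (m i)) (Σ i : Fin k, Fin (m i)) ℂ)).map star =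
          blockDiagonal' (fun i => ((ρ' i h : Matrix (Fin (m i)) (Fin (m i)) ℂ)).map star) := by
        rw [hblock h]
        exact blockDiagonal'_map _ star (star_zero ℂ)
      conv_lhs => rw [hB, hTrel, hmap]
      rw [mul_blockDiagonal'_submatrix, mul_submatrix_id, ← hB]
    have hρmul : (ρ h : Matrix (Fin d) (Fin d) ℂ) * (ρ h⁻¹ : Matrix (Fin d) (Fin d) ℂ) = 1 := by
      rw [← Units.val_mul, ← _root_.map_mul, mul_inv_cancel, _root_.map_one, Units.val_one]
    conv_lhs => rw [hBrel]
    rw [← Matrix.mul_assoc, ← Matrix.mul_assoc, hρmul, Matrix.one_mul, hstar h]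
  -- Schur's lemma argument
  have hB0 : B = 0 := by
    by_contra hBne
    -- kernel of B is invariant under the dual of ρ' j.1
    have hker : ∀ (h : H), ∀ v ∈ LinearMap.ker (Matrix.mulVecLin B),
        (((ρ' j.1 h⁻¹ : Matrix (Fin (m j.1)) (Fin (m j.1)) ℂ))ᵀ).mulVec v ∈
          LinearMap.ker (Matrix.mulVecLin B) := by
      intro h v hv
      rw [LinearMap.mem_ker] at hv ⊢
      rw [mulVecLin_apply] at hv ⊢
      rw [Matrix.mulVec_mulVec, ← key h, ← Matrix.mulVec_mulVec, hv, Matrix.mulVec_zero]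
    have hrange : ∀ (h : H), ∀ v ∈ LinearMap.range (Matrix.mulVecLin B),
        ((ρ h : Matrix (Fin d) (Fin d) ℂ)).mulVec v ∈
          LinearMap.range (Matrix.mulVecLin B) := by
      intro h v hv
      obtain ⟨w, rfl⟩ := hv
      refine ⟨(((ρ' j.1 h⁻¹ : Matrix (Fin (m j.1)) (Fin (m j.1)) ℂ))ᵀ).mulVec w, ?_⟩
      rw [mulVecLin_apply, mulVecLin_apply, Matrix.mulVec_mulVec, Matrix.mulVec_mulVec, key h]
    have hBv : ∃ v, Matrix.mulVecLin B v ≠ 0 := by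
      by_contra hall
      push_neg at hall
      apply hBne
      ext c' q'
      have := congrFun (hall (Pi.single q' 1)) c'
      rw [mulVecLin_apply, mulVec_single] at this
      simpa using this
    rcases dual_irred (ρ' j.1) (hρ' j.1) _ hker with hk | hk
    · -- kernel is ⊥, so B is injective
      rcases hρ _ hrange with hr | hr
      · obtain ⟨v, hv⟩ := hBv
        exact hv (by
          have : Matrix.mulVecLin B v ∈ LinearMap.range (Matrix.mulVecLin B) :=
            ⟨v, rfl⟩
          rw [hr] at this
          simpa using this)
      · -- B is bijective: build the intertwiner and contradict hnotdual
        have hinj : Function.Injective (Matrix.mulVecLin B) :=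
          LinearMap.ker_eq_bot.1 hk
        have hsurj : Function.Surjective (Matrix.mulVecLin B) :=
          LinearMap.range_eq_top.1 hr
        let e := LinearEquiv.ofBijective (Matrix.mulVecLin B) ⟨hinj, hsurj⟩
        let Q' : Matrix (Fin (m j.1)) (Fin d) ℂ := LinearMap.toMatrix' (e.symm : (Fin d → ℂ) →ₗ[ℂ] (Fin (m j.1) → ℂ))
        have hBmat : LinearMap.toMatrix' (Matrix.mulVecLin B) = B := by
          apply LinearMap.toMatrix'_toLin'
        have hBQ' : B * Q' = 1 := by
          rw [← hBmat, ← LinearMap.toMatrix'_comp]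
          have : (Matrix.mulVecLin B) ∘ₗ (e.symm : (Fin d → ℂ) →ₗ[ℂ] (Fin (m j.1) → ℂ)) =
              LinearMap.id := by
            refine LinearMap.ext fun v => ?_
            exact e.apply_symm_apply v
          rw [this, LinearMap.toMatrix'_id]
        have hQ'B : Q' * B = 1 := by
          rw [← hBmat, ← LinearMap.toMatrix'_comp]
          have : (e.symm : (Fin d → ℂ) →ₗ[ℂ] (Fin (m j.1) → ℂ)) ∘ₗ (Matrix.mulVecLin B) =
              LinearMap.id := by
            refine LinearMap.ext fun v => ?_
            exact e.symm_apply_apply v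
          rw [this, LinearMap.toMatrix'_id]
        apply hnotdual
        refine ⟨Q'ᵀ, ⟨Bᵀ, ?_, ?_⟩, ?_⟩
        · rw [← Matrix.transpose_mul, hBQ', Matrix.transpose_one]
        · rw [← Matrix.transpose_mul, hQ'B, Matrix.transpose_one]
        · intro h
          have h1 : B * ((ρ' j.1 h : Matrix (Fin (m j.1)) (Fin (m j.1)) ℂ))ᵀ =
              (ρ h⁻¹ : Matrix (Fin d) (Fin d) ℂ) * B := by
            have := key h⁻¹
            rw [inv_inv] at this
            exact this.symm
          -- transpose: ρ'(h) Bᵀ = Bᵀ ρ(h⁻¹)ᵀ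
          have h2 : (ρ' j.1 h : Matrix (Fin (m j.1)) (Fin (m j.1)) ℂ) * Bᵀ =
              Bᵀ * ((ρ h⁻¹ : Matrix (Fin d) (Fin d) ℂ))ᵀ := by
            have := congrArg Matrix.transpose h1
            rwa [Matrix.transpose_mul, Matrix.transpose_mul, transpose_transpose] at this
          -- sandwich with Q'ᵀ
          have hQtBt : Q'ᵀ * Bᵀ = 1 := by
            rw [← Matrix.transpose_mul, hBQ', Matrix.transpose_one]
          have hBtQt : Bᵀ * Q'ᵀ = 1 := by
            rw [← Matrix.transpose_mul, hQ'B, Matrix.transpose_one]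
          have h4 : Q'ᵀ * (Bᵀ * ((ρ h⁻¹ : Matrix (Fin d) (Fin d) ℂ))ᵀ) * Q'ᵀ =
              ((ρ h⁻¹ : Matrix (Fin d) (Fin d) ℂ))ᵀ * Q'ᵀ := by
            rw [← Matrix.mul_assoc, hQtBt, Matrix.one_mul]
          have h5 : Q'ᵀ * ((ρ' j.1 h : Matrix (Fin (m j.1)) (Fin (m j.1)) ℂ) * Bᵀ) * Q'ᵀ =
              Q'ᵀ * (ρ' j.1 h : Matrix (Fin (m j.1)) (Fin (m j.1)) ℂ) := by
            rw [Matrix.mul_assoc, Matrix.mul_assoc, hBtQt, Matrix.mul_one]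
          rw [← h4, ← h2, h5]
    · -- kernel is ⊤, so B = 0
      obtain ⟨v, hv⟩ := hBv
      apply hv
      have : v ∈ LinearMap.ker (Matrix.mulVecLin B) := hk ▸ Submodule.mem_top
      exact LinearMap.mem_ker.1 this
  -- conclude
  have hfinal : B c j.2 = 0 := by rw [hB0]; rfl
  rw [hB, hT] at hfinal
  simp only [submatrix_apply, id_eq, Finset.sum_apply, Matrix.sum_apply, vecMulVec_apply,
    Sigma.eta] at hfinal
  convert hfinal using 2
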